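/- arXiv:1509.06611 — 2 statements merged into one kernel-verified Lean document; each statement's English description precedes it below -/
import Mathlib

section
/- The Bellman (relative value iteration) operator preserves monotonicity: if V : 𝒬 → ℝ is monotone, then the map Q ↦ min_{u∈𝒰} J_V(Q,u) is monotone with respect to ⪯; consequently, for any fixed reference state Q† ∈ 𝒬, the map Q ↦ min_{u∈𝒰} J_V(Q,u) − min_{u∈𝒰} J_V(Q†,u) is monotone. -/
/-!
For a fixed action `u` and arrival `A`, a served queue is reset to `min(A, N_{n,m})` whatever `Q`
is, and an unserved one becomes `min(Q + A, N_{n,m})`; so `T(·, u, A)` is monotone and lands in the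
bounded state space, where `V` is monotone. Hence every `J_V(·, u)` is monotone, and so is
their minimum over the finite action set.
-/

open Finset

namespace HetNet

/-- The queue index set `I = {(n,m) : 0 ≤ n ≤ N, m ∈ M_n}`. -/
abbrev Idx {N M : ℕ} (cache : Fin (N + 1) → Finset (Fin M)) : Type :=
  {p : Fin (N + 1) × Fin M // p.2 ∈ cache p.1}

/-- The feasible action space `𝒰`: each BS schedules a cached content or idles (`none`),
and the MBS (BS `0`) and the SBSs do not operate concurrently. -/
def Feasible {N M : ℕ} (cache : Fin (N + 1) → Finset (Fin M))
    (u : Fin (N + 1) → Option (Fin M)) : Prop :=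
  (∀ n m, u n = some m → m ∈ cache n) ∧ (u 0 ≠ none → ∀ n, n ≠ 0 → u n = none)

instance {N M : ℕ} (cache : Fin (N + 1) → Finset (Fin M)) :
    DecidablePred (Feasible cache) := by
  intro u; unfold Feasible; infer_instance

instance {N M : ℕ} (cache : Fin (N + 1) → Finset (Fin M)) :
    Nonempty {u : Fin (N + 1) → Option (Fin M) // Feasible cache u} :=
  ⟨⟨fun _ => none, fun _ _ h => by simp at h, fun h => absurd rfl h⟩⟩

/-- Queue `(n,m)` is served by action `u`. -/
def Served {N M : ℕ} (u : Fin (N + 1) → Option (Fin M)) (n : Fin (N + 1)) (m : Fin M) : Prop :=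
  (n = 0 ∧ u 0 = some m) ∨ (n ≠ 0 ∧ (u 0 = some m ∨ u n = some m))

instance {N M : ℕ} (u : Fin (N + 1) → Option (Fin M)) (n : Fin (N + 1)) (m : Fin M) :
    Decidable (Served u n m) := by unfold Served; infer_instance

/-- The queue transition map `T(Q,u,A)`. -/
def T {N M : ℕ} {cache : Fin (N + 1) → Finset (Fin M)} (bound : Idx cache → ℕ)
    (Q : Idx cache → ℕ) (u : Fin (N + 1) → Option (Fin M)) (A : Idx cache → ℕ) :
    Idx cache → ℕ := fun i =>
  if Served u i.val.1 i.val.2 then min (A i) (bound i) else min (Q i + A i) (bound i)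

/-- The network power cost `p(u) = Σ_n p(n, u_n)` (with `p(n,0) = 0` for an idling BS). -/
def pcost {N M : ℕ} (p : Fin (N + 1) → Fin M → ℝ) (u : Fin (N + 1) → Option (Fin M)) : ℝ :=
  ∑ n, (u n).elim 0 (p n)

/-- The sum request queue length `d(Q)`. -/
def dcost {N M : ℕ} {cache : Fin (N + 1) → Finset (Fin M)} (Q : Idx cache → ℕ) : ℝ :=
  ∑ i, (Q i : ℝ)

/-- The per-stage cost `g(Q,u) = d(Q) + w·p(u)`. -/
def gcost {N M : ℕ} (p : Fin (N + 1) → Fin M → ℝ) (w : ℝ)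
    {cache : Fin (N + 1) → Finset (Fin M)}
    (Q : Idx cache → ℕ) (u : Fin (N + 1) → Option (Fin M)) : ℝ :=
  dcost Q + w * pcost p u

/-- The state-action cost `J_V(Q,u) = g(Q,u) + Σ_{A∈𝒜} P(A)·V(T(Q,u,A))`. -/
def Jcost {N M : ℕ} (p : Fin (N + 1) → Fin M → ℝ) (w : ℝ)
    {cache : Fin (N + 1) → Finset (Fin M)} (bound : Idx cache → ℕ)
    {ι : Type} [Fintype ι] (P : ι → ℝ) (A : ι → Idx cache → ℕ)
    (V : (Idx cache → ℕ) → ℝ) (Q : Idx cache → ℕ)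
    (u : Fin (N + 1) → Option (Fin M)) : ℝ :=
  gcost p w Q u + ∑ a, P a * V (T bound Q u (A a))

variable {N M : ℕ} {cache : Fin (N + 1) → Finset (Fin M)} (bound : Idx cache → ℕ)

theorem T_le_bound (Q : Idx cache → ℕ) (u : Fin (N + 1) → Option (Fin M))
    (A : Idx cache → ℕ) : T bound Q u A ≤ bound := fun i => by
  unfold T
  split <;> exact min_le_right _ _

theorem T_mono (u : Fin (N + 1) → Option (Fin M)) (A : Idx cache → ℕ) :
    Monotone fun Q => T bound Q u A := fun _ _ hQ i => by
  simp only [T]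
  split
  · exact le_rfl
  · exact min_le_min_right _ (Nat.add_le_add_right (hQ i) _)

theorem dcost_mono : Monotone (dcost (cache := cache)) := fun _ _ hQ =>
  sum_le_sum fun i _ => Nat.cast_le.mpr (hQ i)

theorem Jcost_mono (p : Fin (N + 1) → Fin M → ℝ) (w : ℝ) {ι : Type} [Fintype ι]
    {P : ι → ℝ} (hP : ∀ a, 0 ≤ P a) (A : ι → Idx cache → ℕ) {V : (Idx cache → ℕ) → ℝ}
    (hV : MonotoneOn V (Set.Iic bound)) (u : Fin (N + 1) → Option (Fin M)) :
    Monotone fun Q => Jcost p w bound P A V Q u := by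
  intro Q₁ Q₂ hQ
  have hd : dcost Q₁ ≤ dcost Q₂ := dcost_mono hQ
  have hVT : ∀ a, V (T bound Q₁ u (A a)) ≤ V (T bound Q₂ u (A a)) := fun a =>
    hV (T_le_bound bound _ u _) (T_le_bound bound _ u _) (T_mono bound u (A a) hQ)
  simp only [Jcost, gcost]
  gcongr with a
  exacts [hP a, hVT a]

theorem bellman_preserves_monotone_general {N M : ℕ} (cache : Fin (N + 1) → Finset (Fin M))
    (bound : Idx cache → ℕ)
    (p : Fin (N + 1) → Fin M → ℝ)
    (w : ℝ)
    {ι : Type} [Fintype ι] (P : ι → ℝ) (A : ι → Idx cache → ℕ)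
    (hP : ∀ a, 0 ≤ P a)
    (V : (Idx cache → ℕ) → ℝ)
    (hV : ∀ Q₁ Q₂ : Idx cache → ℕ, (∀ i, Q₁ i ≤ bound i) → (∀ i, Q₂ i ≤ bound i) →
      (∀ i, Q₁ i ≤ Q₂ i) → V Q₁ ≤ V Q₂)
    (Qd : Idx cache → ℕ) :
    ∀ Q₁ Q₂ : Idx cache → ℕ, (∀ i, Q₁ i ≤ bound i) → (∀ i, Q₂ i ≤ bound i) →
      (∀ i, Q₁ i ≤ Q₂ i) →
      (⨅ u : {u // Feasible cache u}, Jcost p w bound P A V Q₁ u.val) ≤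
          (⨅ u : {u // Feasible cache u}, Jcost p w bound P A V Q₂ u.val) ∧
        (⨅ u : {u // Feasible cache u}, Jcost p w bound P A V Q₁ u.val) -
            (⨅ u : {u // Feasible cache u}, Jcost p w bound P A V Qd u.val) ≤
          (⨅ u : {u // Feasible cache u}, Jcost p w bound P A V Q₂ u.val) -
            (⨅ u : {u // Feasible cache u}, Jcost p w bound P A V Qd u.val) := by
  intro Q₁ Q₂ _ _ hQ
  have hVmono : MonotoneOn V (Set.Iic bound) := fun Q₁ hQ₁ Q₂ hQ₂ => hV Q₁ Q₂ hQ₁ hQ₂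
  have hmin : (⨅ u : {u // Feasible cache u}, Jcost p w bound P A V Q₁ u.val) ≤
      ⨅ u : {u // Feasible cache u}, Jcost p w bound P A V Q₂ u.val :=
    ciInf_mono (Set.finite_range _).bddBelow fun u =>
      Jcost_mono bound p w hP A hVmono u.val (show Q₁ ≤ Q₂ from hQ)
  exact ⟨hmin, sub_le_sub_right hmin _⟩

/-- the Bellman / relative value iteration operator preserves monotonicity:
if `V : 𝒬 → ℝ` is monotone, then `Q ↦ min_{u∈𝒰} J_V(Q,u)` is monotone w.r.t. `⪯`;
consequently, for any fixed reference state `Q† ∈ 𝒬`, the map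
`Q ↦ min_{u∈𝒰} J_V(Q,u) − min_{u∈𝒰} J_V(Q†,u)` is monotone. -/
theorem bellman_preserves_monotone {N M : ℕ} (cache : Fin (N + 1) → Finset (Fin M))
    (hcache0 : ∀ m : Fin M, m ∈ cache 0)
    (bound : Idx cache → ℕ)
    (p : Fin (N + 1) → Fin M → ℝ) (hp : ∀ n m, 0 ≤ p n m)
    (w : ℝ) (hw : 0 ≤ w)
    {ι : Type} [Fintype ι] (P : ι → ℝ) (A : ι → Idx cache → ℕ)
    (hP : ∀ a, 0 ≤ P a) (hPsum : ∑ a, P a = 1)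
    (V : (Idx cache → ℕ) → ℝ)
    (hV : ∀ Q₁ Q₂ : Idx cache → ℕ, (∀ i, Q₁ i ≤ bound i) → (∀ i, Q₂ i ≤ bound i) →
      (∀ i, Q₁ i ≤ Q₂ i) → V Q₁ ≤ V Q₂)
    (Qd : Idx cache → ℕ) (hQd : ∀ i, Qd i ≤ bound i) :
    ∀ Q₁ Q₂ : Idx cache → ℕ, (∀ i, Q₁ i ≤ bound i) → (∀ i, Q₂ i ≤ bound i) →
      (∀ i, Q₁ i ≤ Q₂ i) →
      (⨅ u : {u // Feasible cache u}, Jcost p w bound P A V Q₁ u.val) ≤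
          (⨅ u : {u // Feasible cache u}, Jcost p w bound P A V Q₂ u.val) ∧
        (⨅ u : {u // Feasible cache u}, Jcost p w bound P A V Q₁ u.val) -
            (⨅ u : {u // Feasible cache u}, Jcost p w bound P A V Qd u.val) ≤
          (⨅ u : {u // Feasible cache u}, Jcost p w bound P A V Q₂ u.val) -
            (⨅ u : {u // Feasible cache u}, Jcost p w bound P A V Qd u.val) :=
  bellman_preserves_monotone_general cache bound p w P A hP V hV Qd

end HetNet
end

section
/- Monotonicity of Δ̂ under the additive separable value approximation (intermediate step of Theorem 2): let V̂_{n,m} : {0,…,N_{n,m}} → ℝ be non-decreasing for every (n,m) ∈ I and set V̂(Q) = Σ_{(n,m)∈I} V̂_{n,m}(Q_{n,m}). Then Δ̂_{u,v} satisfies both monotonicity properties of Lemma 3: (1) if u_0 = m ∈ M_0, then Δ̂_{u,v}(Q) is monotonically non-increasing in Q_{0,m} and in Q_{n,m} for every n ∈ N_m; (2) if u_n = m ∈ M_n for some n ∈ {1,…,N}, then Δ̂_{u,v}(Q) is monotonically non-increasing in Q_{n,m} (all other coordinates held fixed, for every v ∈ 𝒰). -/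
open Finset

namespace HetNet

section Transition

variable {N M : ℕ} {cache : Fin (N + 1) → Finset (Fin M)} (bound : Idx cache → ℕ)
  (u : Fin (N + 1) → Option (Fin M)) (A : Idx cache → ℕ) (i : Idx cache)

lemma T_apply_of_served (h : Served u i.val.1 i.val.2) (Q₁ Q₂ : Idx cache → ℕ) :
    T bound Q₁ u A i = T bound Q₂ u A i := by
  simp only [T, if_pos h]

lemma T_apply_congr {Q₁ Q₂ : Idx cache → ℕ} (h : Q₁ i = Q₂ i) :
    T bound Q₁ u A i = T bound Q₂ u A i := by
  simp only [T, h]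

lemma T_apply_mono {Q₁ Q₂ : Idx cache → ℕ} (h : Q₂ i ≤ Q₁ i) :
    T bound Q₂ u A i ≤ T bound Q₁ u A i := by
  unfold T
  split_ifs
  · rfl
  · exact min_le_min_right _ (Nat.add_le_add_right h _)

lemma T_apply_le_bound (Q : Idx cache → ℕ) : T bound Q u A i ≤ bound i := by
  unfold T
  split_ifs <;> exact min_le_right _ _

/-- A queue served by `u` is emptied before arrivals, so the `u`-successor forgets the excess of
`Q₁` over `Q₂` while the `v`-successor can only grow with it. -/
lemma sub_value_T_antitone (v : Fin (N + 1) → Option (Fin M)) {f : ℕ → ℝ}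
    (hf : ∀ q q', q ≤ q' → q' ≤ bound i → f q ≤ f q') {Q₁ Q₂ : Idx cache → ℕ}
    (hQ : Q₁ i = Q₂ i ∨ (Served u i.val.1 i.val.2 ∧ Q₂ i ≤ Q₁ i)) :
    f (T bound Q₁ u A i) - f (T bound Q₁ v A i) ≤
      f (T bound Q₂ u A i) - f (T bound Q₂ v A i) := by
  rcases hQ with heq | ⟨hserved, hle⟩
  · rw [T_apply_congr bound u A i heq, T_apply_congr bound v A i heq]
  · rw [T_apply_of_served bound u A i hserved Q₁ Q₂]
    exact sub_le_sub_left
      (hf _ _ (T_apply_mono bound v A i hle) (T_apply_le_bound bound v A i Q₁)) _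

end Transition

lemma served_of_apply_eq {N M : ℕ} {u : Fin (N + 1) → Option (Fin M)} {n : Fin (N + 1)}
    {m : Fin M} (h : u n = some m) : Served u n m := by
  by_cases hn : n = 0
  · subst hn
    exact Or.inl ⟨rfl, h⟩
  · exact Or.inr ⟨hn, Or.inr h⟩

lemma served_of_apply_zero_eq {N M : ℕ} {u : Fin (N + 1) → Option (Fin M)} {m : Fin M}
    (h : u 0 = some m) (n : Fin (N + 1)) : Served u n m := by
  by_cases hn : n = 0
  · exact Or.inl ⟨hn, h⟩
  · exact Or.inr ⟨hn, Or.inl h⟩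

section Cost

variable {N M : ℕ} {cache : Fin (N + 1) → Finset (Fin M)} (bound : Idx cache → ℕ)
  (p : Fin (N + 1) → Fin M → ℝ) (w : ℝ) {ι : Type} [Fintype ι] (P : ι → ℝ)
  (A : ι → Idx cache → ℕ) (Vv : (i : Idx cache) → ℕ → ℝ) (u v : Fin (N + 1) → Option (Fin M))

lemma Jcost_sub_Jcost_of_separable (Q : Idx cache → ℕ) :
    Jcost p w bound P A (fun Q => ∑ i, Vv i (Q i)) Q u -
        Jcost p w bound P A (fun Q => ∑ i, Vv i (Q i)) Q v =
      w * (pcost p u - pcost p v) +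
        ∑ a, P a * ∑ i, (Vv i (T bound Q u (A a) i) - Vv i (T bound Q v (A a) i)) := by
  simp only [Jcost, gcost, Finset.sum_sub_distrib, mul_sub]
  ring

lemma Jcost_sub_Jcost_antitone (hP : ∀ a, 0 ≤ P a)
    (hVv : ∀ i : Idx cache, ∀ q q' : ℕ, q ≤ q' → q' ≤ bound i → Vv i q ≤ Vv i q')
    {Q₁ Q₂ : Idx cache → ℕ}
    (hQ : ∀ i : Idx cache, Q₁ i = Q₂ i ∨ (Served u i.val.1 i.val.2 ∧ Q₂ i ≤ Q₁ i)) :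
    Jcost p w bound P A (fun Q => ∑ i, Vv i (Q i)) Q₁ u -
        Jcost p w bound P A (fun Q => ∑ i, Vv i (Q i)) Q₁ v ≤
      Jcost p w bound P A (fun Q => ∑ i, Vv i (Q i)) Q₂ u -
        Jcost p w bound P A (fun Q => ∑ i, Vv i (Q i)) Q₂ v := by
  rw [Jcost_sub_Jcost_of_separable, Jcost_sub_Jcost_of_separable]
  refine add_le_add_right (Finset.sum_le_sum fun a _ => mul_le_mul_of_nonneg_left ?_ (hP a)) _
  exact Finset.sum_le_sum fun i _ => sub_value_T_antitone bound u (A a) i v (hVv i) (hQ i)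

end Cost

theorem delta_hat_monotone_general {N M : ℕ} (cache : Fin (N + 1) → Finset (Fin M))
    (bound : Idx cache → ℕ)
    (p : Fin (N + 1) → Fin M → ℝ)
    (w : ℝ)
    {ι : Type} [Fintype ι] (P : ι → ℝ) (A : ι → Idx cache → ℕ)
    (hP : ∀ a, 0 ≤ P a)
    (Vv : (i : Idx cache) → ℕ → ℝ)
    (hVv : ∀ i : Idx cache, ∀ q q' : ℕ, q ≤ q' → q' ≤ bound i → Vv i q ≤ Vv i q') :
    (∀ u v : Fin (N + 1) → Option (Fin M), Feasible cache u → Feasible cache v →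
      ∀ m : Fin M, u 0 = some m →
      ∀ Q₁ Q₂ : Idx cache → ℕ, (∀ i, Q₁ i ≤ bound i) → (∀ i, Q₂ i ≤ bound i) →
      (∀ i : Idx cache,
        ¬(i.val = ((0 : Fin (N + 1)), m) ∨ (i.val.1 ≠ 0 ∧ i.val.2 = m ∧ m ∈ cache i.val.1)) →
        Q₁ i = Q₂ i) →
      (∀ i : Idx cache,
        (i.val = ((0 : Fin (N + 1)), m) ∨ (i.val.1 ≠ 0 ∧ i.val.2 = m ∧ m ∈ cache i.val.1)) →
        Q₂ i ≤ Q₁ i) →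
      Jcost p w bound P A (fun Q => ∑ i, Vv i (Q i)) Q₁ u -
          Jcost p w bound P A (fun Q => ∑ i, Vv i (Q i)) Q₁ v ≤
        Jcost p w bound P A (fun Q => ∑ i, Vv i (Q i)) Q₂ u -
          Jcost p w bound P A (fun Q => ∑ i, Vv i (Q i)) Q₂ v) ∧
    (∀ u v : Fin (N + 1) → Option (Fin M), Feasible cache u → Feasible cache v →
      ∀ n : Fin (N + 1), n ≠ 0 → ∀ m : Fin M, ∀ hm : m ∈ cache n, u n = some m →
      ∀ Q₁ Q₂ : Idx cache → ℕ, (∀ i, Q₁ i ≤ bound i) → (∀ i, Q₂ i ≤ bound i) →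
      (∀ i : Idx cache, i.val ≠ (n, m) → Q₁ i = Q₂ i) →
      Q₂ ⟨(n, m), hm⟩ ≤ Q₁ ⟨(n, m), hm⟩ →
      Jcost p w bound P A (fun Q => ∑ i, Vv i (Q i)) Q₁ u -
          Jcost p w bound P A (fun Q => ∑ i, Vv i (Q i)) Q₁ v ≤
        Jcost p w bound P A (fun Q => ∑ i, Vv i (Q i)) Q₂ u -
          Jcost p w bound P A (fun Q => ∑ i, Vv i (Q i)) Q₂ v) := by
  constructor
  · intro u v _ _ m hum Q₁ Q₂ _ _ hoff hon
    refine Jcost_sub_Jcost_antitone bound p w P A Vv u v hP hVv fun i => ?_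
    by_cases hi : i.val = ((0 : Fin (N + 1)), m) ∨
        (i.val.1 ≠ 0 ∧ i.val.2 = m ∧ m ∈ cache i.val.1)
    · have hcontent : i.val.2 = m := by
        rcases hi with hi | ⟨_, hcontent, _⟩
        · rw [hi]
        · exact hcontent
      exact Or.inr ⟨hcontent ▸ served_of_apply_zero_eq hum i.val.1, hon i hi⟩
    · exact Or.inl (hoff i hi)
  · intro u v _ _ n _ m hm hun Q₁ Q₂ _ _ hoff hon
    refine Jcost_sub_Jcost_antitone bound p w P A Vv u v hP hVv fun i => ?_
    by_cases hi : i.val = (n, m)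
    · obtain rfl : i = ⟨(n, m), hm⟩ := Subtype.ext hi
      exact Or.inr ⟨served_of_apply_eq hun, hon⟩
    · exact Or.inl (hoff i hi)

/-- intermediate step of Theorem 2: monotonicity of `Δ̂` under the additive
separable value approximation: if each `V̂_{n,m}` is non-decreasing on `{0,…,N_{n,m}}` and
`V̂(Q) = Σ V̂_{n,m}(Q_{n,m})`, then `Δ̂_{u,v}` satisfies both monotonicity properties of
Lemma 3: (1) if `u_0 = m ∈ M_0`, then `Δ̂_{u,v}(Q)` is non-increasing in `Q_{0,m}` and in
`Q_{n,m}` for every `n ∈ N_m`; (2) if `u_n = m ∈ M_n` for some SBS `n`, then `Δ̂_{u,v}(Q)`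
is non-increasing in `Q_{n,m}`. -/
theorem delta_hat_monotone {N M : ℕ} (cache : Fin (N + 1) → Finset (Fin M))
    (hcache0 : ∀ m : Fin M, m ∈ cache 0)
    (bound : Idx cache → ℕ)
    (p : Fin (N + 1) → Fin M → ℝ) (hp : ∀ n m, 0 ≤ p n m)
    (w : ℝ) (hw : 0 ≤ w)
    {ι : Type} [Fintype ι] (P : ι → ℝ) (A : ι → Idx cache → ℕ)
    (hP : ∀ a, 0 ≤ P a) (hPsum : ∑ a, P a = 1)
    (Vv : (i : Idx cache) → ℕ → ℝ)
    (hVv : ∀ i : Idx cache, ∀ q q' : ℕ, q ≤ q' → q' ≤ bound i → Vv i q ≤ Vv i q') :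
    (∀ u v : Fin (N + 1) → Option (Fin M), Feasible cache u → Feasible cache v →
      ∀ m : Fin M, u 0 = some m →
      ∀ Q₁ Q₂ : Idx cache → ℕ, (∀ i, Q₁ i ≤ bound i) → (∀ i, Q₂ i ≤ bound i) →
      (∀ i : Idx cache,
        ¬(i.val = ((0 : Fin (N + 1)), m) ∨ (i.val.1 ≠ 0 ∧ i.val.2 = m ∧ m ∈ cache i.val.1)) →
        Q₁ i = Q₂ i) →
      (∀ i : Idx cache,
        (i.val = ((0 : Fin (N + 1)), m) ∨ (i.val.1 ≠ 0 ∧ i.val.2 = m ∧ m ∈ cache i.val.1)) →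
        Q₂ i ≤ Q₁ i) →
      Jcost p w bound P A (fun Q => ∑ i, Vv i (Q i)) Q₁ u -
          Jcost p w bound P A (fun Q => ∑ i, Vv i (Q i)) Q₁ v ≤
        Jcost p w bound P A (fun Q => ∑ i, Vv i (Q i)) Q₂ u -
          Jcost p w bound P A (fun Q => ∑ i, Vv i (Q i)) Q₂ v) ∧
    (∀ u v : Fin (N + 1) → Option (Fin M), Feasible cache u → Feasible cache v →
      ∀ n : Fin (N + 1), n ≠ 0 → ∀ m : Fin M, ∀ hm : m ∈ cache n, u n = some m →
      ∀ Q₁ Q₂ : Idx cache → ℕ, (∀ i, Q₁ i ≤ bound i) → (∀ i, Q₂ i ≤ bound i) →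
      (∀ i : Idx cache, i.val ≠ (n, m) → Q₁ i = Q₂ i) →
      Q₂ ⟨(n, m), hm⟩ ≤ Q₁ ⟨(n, m), hm⟩ →
      Jcost p w bound P A (fun Q => ∑ i, Vv i (Q i)) Q₁ u -
          Jcost p w bound P A (fun Q => ∑ i, Vv i (Q i)) Q₁ v ≤
        Jcost p w bound P A (fun Q => ∑ i, Vv i (Q i)) Q₂ u -
          Jcost p w bound P A (fun Q => ∑ i, Vv i (Q i)) Q₂ v) :=
  delta_hat_monotone_general cache bound p w P A hP Vv hVv

end HetNet
end
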